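/- arXiv:1210.0398 — 4 statements merged into one kernel-verified Lean document; each statement's English description precedes it below -/
import Mathlib

section
/- Stellar subdivision at an edge preserves flagness: if K is a flag simplicial complex, e = {a,b} is an edge of K, and w is a vertex not belonging to K, then the stellar subdivision sd_e(K) of K at e with apex w is a flag simplicial complex. (Dual form of the proposition: any 2-truncation of a simple polytope preserves flagness.) -/
open Polynomial
open scoped Classical

/-- A (finite) simplicial complex: a family of finite faces closed under subsets. -/
def IsComplex {V : Type*} (K : Finset (Finset V)) : Prop :=
  ∀ F ∈ K, ∀ G ⊆ F, G ∈ K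

/-- A flag simplicial complex: any set of vertices that is pairwise connected
by edges of `K` is a face of `K`. -/
def IsFlag {V : Type*} [DecidableEq V] (K : Finset (Finset V)) : Prop :=
  IsComplex K ∧ ∀ S : Finset V,
    (∀ v ∈ S, ({v} : Finset V) ∈ K) →
    (∀ u ∈ S, ∀ v ∈ S, u ≠ v → ({u, v} : Finset V) ∈ K) →
    S ∈ K

/-- The link of a face `σ` in `K`. -/
noncomputable def link {V : Type*} [DecidableEq V] (K : Finset (Finset V)) (σ : Finset V) :
    Finset (Finset V) :=
  K.filter fun F => Disjoint F σ ∧ F ∪ σ ∈ K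

/-- Stellar subdivision of `K` at the face `e` with (fresh) apex `w`:
`sd_e(K) = {F ∈ K : ¬(e ⊆ F)} ∪ {F ∪ S ∪ {w} : F ∈ link_K(e), S ⊊ e}`. -/
noncomputable def stellarSub {V : Type*} [DecidableEq V] (K : Finset (Finset V))
    (e : Finset V) (w : V) : Finset (Finset V) :=
  (K.filter fun F => ¬ e ⊆ F) ∪
    (link K e).biUnion fun F => e.ssubsets.image fun S => F ∪ S ∪ {w}

/-- The f-polynomial `f(K)(t) = Σ_{F ∈ K} t^|F| = Σ_i f_{i-1}(K) tⁱ`. -/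
noncomputable def fPoly {V : Type*} (K : Finset (Finset V)) : ℤ[X] :=
  ∑ F ∈ K, X ^ F.card

/-- The h-polynomial of rank `n`:
`h_n(K)(t) = Σ_{i=0}^{n} f_{i-1}(K) tⁱ (1-t)^{n-i} = Σ_{F ∈ K} t^|F| (1-t)^{n-|F|}`. -/
noncomputable def hPoly {V : Type*} (K : Finset (Finset V)) (n : ℕ) : ℤ[X] :=
  ∑ F ∈ K, X ^ F.card * (1 - X) ^ (n - F.card)

/-- `faceCount K i = f_{i-1}(K)`, the number of faces of `K` of cardinality `i`. -/
noncomputable def faceCount {V : Type*} (K : Finset (Finset V)) (i : ℕ) : ℕ :=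
  (K.filter fun F => F.card = i).card

/-- The boundary complex `∂♢ⁿ` of the `n`-dimensional cross-polytope, with
vertices `a_i = 2i`, `b_i = 2i+1` (`0 ≤ i < n`): all subsets containing at most
one of `a_i, b_i` for each `i`. -/
noncomputable def crossPolytopeBoundary (n : ℕ) : Finset (Finset ℕ) :=
  (Finset.range (2 * n)).powerset.filter fun F =>
    ∀ i < n, ¬ (2 * i ∈ F ∧ 2 * i + 1 ∈ F)

/-- Complexes obtained from `∂♢ⁿ` by a finite sequence of stellar subdivisions
at edges, each with a fresh apex vertex: the boundary complexes of duals of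
2-truncated `n`-cubes. -/
inductive TwoTruncated (n : ℕ) : Finset (Finset ℕ) → Prop
  | base : TwoTruncated n (crossPolytopeBoundary n)
  | step (K : Finset (Finset ℕ)) (a b w : ℕ) :
      TwoTruncated n K → a ≠ b → ({a, b} : Finset ℕ) ∈ K →
      (∀ F ∈ K, w ∉ F) →
      TwoTruncated n (stellarSub K {a, b} w)

/-- Membership characterization for stellar subdivision. -/
lemma mem_stellarSub_iff {V : Type*} [DecidableEq V] (K : Finset (Finset V)) (e : Finset V)
    (w : V) (hK : IsComplex K) (he : e ∈ K) (hw : ∀ F ∈ K, w ∉ F) (G : Finset V) :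
    G ∈ stellarSub K e w ↔
      (G ∈ K ∧ ¬ e ⊆ G) ∨
      (w ∈ G ∧ G.erase w ∈ K ∧ ¬ e ⊆ G.erase w ∧ (G.erase w) ∪ e ∈ K) := by
  unfold stellarSub link
  simp only [Finset.mem_union, Finset.mem_filter, Finset.mem_biUnion, Finset.mem_image,
    Finset.mem_ssubsets]
  constructor
  · rintro (⟨hG, hne⟩ | ⟨F, ⟨hF, hdisj, hFe⟩, S, hS, rfl⟩)
    · exact Or.inl ⟨hG, hne⟩
    · right
      have hwF : w ∉ F := hw F hF
      have hwe : w ∉ e := hw e he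
      have hSe : S ⊆ e := hS.subset
      have hwS : w ∉ S := fun h => hwe (hSe h)
      have herase : (F ∪ S ∪ {w}).erase w = F ∪ S := by
        rw [Finset.union_comm _ {w}, ← Finset.insert_eq, Finset.erase_insert]
        simp [hwF, hwS]
      have hFS : F ∪ S ∈ K :=
        hK _ hFe _ (Finset.union_subset Finset.subset_union_left
          (hSe.trans Finset.subset_union_right))
      refine ⟨by simp, ?_, ?_, ?_⟩
      · rw [herase]; exact hFS
      · rw [herase]
        intro hsub
        rcases Finset.exists_of_ssubset hS with ⟨x, hxe, hxS⟩
        rcases Finset.mem_union.mp (hsub hxe) with h | h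
        · exact (Finset.disjoint_left.mp hdisj h) hxe
        · exact hxS h
      · rw [herase, Finset.union_assoc, Finset.union_eq_right.mpr hSe]
        exact hFe
  · rintro (⟨hG, hne⟩ | ⟨hwG, hG', hne', hGe⟩)
    · exact Or.inl ⟨hG, hne⟩
    · right
      refine ⟨G.erase w \ e, ⟨?_, Finset.sdiff_disjoint, ?_⟩,
        G.erase w ∩ e, ?_, ?_⟩
      · exact hK _ hG' _ Finset.sdiff_subset
      · rw [Finset.sdiff_union_self_eq_union]; exact hGe
      · refine Finset.ssubset_iff_subset_ne.mpr ⟨Finset.inter_subset_right, ?_⟩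
        intro h
        exact hne' (h ▸ (Finset.inter_subset_left : G.erase w ∩ e ⊆ G.erase w))
      · rw [Finset.sdiff_union_inter, Finset.union_comm, ← Finset.insert_eq,
          Finset.insert_erase hwG]

/-- Stellar subdivision at an edge preserves flagness: if `K`
is flag, `e = {a,b}` is an edge of `K` and `w` is not a vertex of `K`, then
`sd_e(K)` is flag. -/
theorem stellarSub_isFlag {V : Type*} [DecidableEq V] (K : Finset (Finset V)) (a b w : V)
    (hK : IsFlag K) (hab : a ≠ b) (he : ({a, b} : Finset V) ∈ K)
    (hw : ∀ F ∈ K, w ∉ F) :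
    IsFlag (stellarSub K {a, b} w) := by
  obtain ⟨hC, hFlag⟩ := hK
  set e : Finset V := {a, b} with he_def
  have hwe : w ∉ e := hw e he
  have hmem := mem_stellarSub_iff K e w hC he hw
  constructor
  · -- IsComplex
    intro G hG H hH
    rw [hmem] at hG ⊢
    rcases hG with ⟨hGK, hne⟩ | ⟨hwG, hG', hne', hGe⟩
    · exact Or.inl ⟨hC _ hGK _ hH, fun h => hne (h.trans hH)⟩
    · by_cases hwH : w ∈ H
      · right
        have hsub : H.erase w ⊆ G.erase w := Finset.erase_subset_erase _ hH
        exact ⟨hwH, hC _ hG' _ hsub, fun h => hne' (h.trans hsub),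
          hC _ hGe _ (Finset.union_subset_union_left hsub)⟩
      · left
        have hsub : H ⊆ G.erase w := Finset.subset_erase.mpr ⟨hH, hwH⟩
        exact ⟨hC _ hG' _ hsub, fun h => hne' (h.trans hsub)⟩
  · intro S hv hp
    -- edges of the subdivision not containing w are edges of K avoiding e
    have hpair : ∀ u ∈ S, ∀ v ∈ S, u ≠ v → u ≠ w → v ≠ w →
        ({u, v} : Finset V) ∈ K ∧ ¬ e ⊆ ({u, v} : Finset V) := by
      intro u hu v hvS huv huw hvw
      have := hp u hu v hvS huv
      rw [hmem] at this
      rcases this with h | ⟨h, _⟩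
      · exact h
      · rcases Finset.mem_insert.mp h with h | h
        · exact absurd h.symm huw
        · exact absurd (Finset.mem_singleton.mp h).symm hvw
    have hvK : ∀ v ∈ S, v ≠ w → ({v} : Finset V) ∈ K := by
      intro v hvS hvw
      have := hv v hvS
      rw [hmem] at this
      rcases this with ⟨h, _⟩ | ⟨h, _⟩
      · exact h
      · exact absurd (Finset.mem_singleton.mp h).symm hvw
    have hnabS : ∀ (hwS : a ∈ S → b ∈ S → False), ¬ e ⊆ S → True := fun _ _ => trivial
    -- key: e is not contained in S \ {w}
    have hneS : ¬ e ⊆ S.erase w := by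
      intro hsub
      have haS : a ∈ S.erase w := hsub (by simp [he_def])
      have hbS : b ∈ S.erase w := hsub (by simp [he_def])
      have := (hpair a (Finset.mem_of_mem_erase haS) b (Finset.mem_of_mem_erase hbS) hab
        (Finset.ne_of_mem_erase haS) (Finset.ne_of_mem_erase hbS)).2
      exact this (le_refl e)
    by_cases hwS : w ∈ S
    · -- S contains the apex
      set S' := S.erase w with hS'def
      have hvw' : ∀ v ∈ S', v ≠ w := fun v hv => Finset.ne_of_mem_erase hv
      -- for each v ∈ S', {v} ∪ e ∈ K
      have hve : ∀ v ∈ S', ({v} : Finset V) ∪ e ∈ K := by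
        intro v hvS'
        have hpw := hp w hwS v (Finset.mem_of_mem_erase hvS') (fun h => hvw' v hvS' h.symm)
        rw [hmem] at hpw
        rcases hpw with ⟨h, _⟩ | ⟨_, _, _, h⟩
        · exact absurd (by simp) (hw _ h)
        · have : ({w, v} : Finset V).erase w = {v} :=
            Finset.erase_insert (by simp [Ne.symm (hvw' v hvS')])
          rwa [this] at h
      -- S' ∪ e is pairwise connected in K
      have hS'e : S' ∪ e ∈ K := by
        apply hFlag
        · intro v hv'
          rcases Finset.mem_union.mp hv' with h | h
          · exact hvK v (Finset.mem_of_mem_erase h) (hvw' v h)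
          · exact hC _ he _ (Finset.singleton_subset_iff.mpr h)
        · intro u hu v hv' huv
          rcases Finset.mem_union.mp hu with hu' | hu'
          · rcases Finset.mem_union.mp hv' with hv'' | hv''
            · exact (hpair u (Finset.mem_of_mem_erase hu') v (Finset.mem_of_mem_erase hv'')
                huv (hvw' u hu') (hvw' v hv'')).1
            · exact hC _ (hve u hu') _ (by
                intro x hx
                rcases Finset.mem_insert.mp hx with rfl | hx
                · exact Finset.mem_union_left _ (by simp)
                · exact Finset.mem_union_right _ (by
                    rwa [Finset.mem_singleton.mp hx]))
          · rcases Finset.mem_union.mp hv' with hv'' | hv''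
            · exact hC _ (hve v hv'') _ (by
                intro x hx
                rcases Finset.mem_insert.mp hx with rfl | hx
                · exact Finset.mem_union_right _ hu'
                · rw [Finset.mem_singleton.mp hx]
                  exact Finset.mem_union_left _ (by simp))
            · exact hC _ he _ (by
                intro x hx
                rcases Finset.mem_insert.mp hx with rfl | hx
                · exact hu'
                · rw [Finset.mem_singleton.mp hx]; exact hv'')
      rw [hmem]
      exact Or.inr ⟨hwS, hC _ hS'e _ Finset.subset_union_left, hneS, hS'e⟩
    · -- S avoids the apex
      have hSK : S ∈ K := by
        apply hFlag
        · exact fun v hv' => hvK v hv' (fun h => hwS (h ▸ hv'))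
        · intro u hu v hv' huv
          exact (hpair u hu v hv' huv (fun h => hwS (h ▸ hu)) (fun h => hwS (h ▸ hv'))).1
      have : ¬ e ⊆ S := by
        intro hsub
        exact hneS (hsub.trans (Finset.subset_erase.mpr ⟨le_refl S, hwS⟩))
      rw [hmem]
      exact Or.inl ⟨hSK, this⟩
end

section
/- Change of the f-polynomial under edge stellar subdivision: if K is a simplicial complex, e = {a,b} is an edge of K, and w is a vertex not belonging to K, then sd_e(K) is a simplicial complex and, in ℤ[t], f(sd_e(K))(t) = f(K)(t) + t·(1+t)·f(link_K(e))(t). -/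
open Polynomial
open scoped Classical

/-!
Faces of `K` not containing `e` are untouched. The faces containing `e` correspond to the link
via `F ↦ F \ e`, so removing them costs `t^|e| f(link)`. The new faces `L ∪ S ∪ {w}`
(`L` in the link, `S ⊊ e`) are pairwise distinct, because `S` and `L` are recovered by
intersecting with `e` and removing `e ∪ {w}`; they contribute `t ((1+t)^|e| - t^|e|) f(link)`.
For an edge, `t (1 + 2t) - t² = t (1 + t)`.
-/

open Finset

theorem Finset.sum_pow_card_ssubsets {α R : Type*} [DecidableEq α] [CommRing R] (s : Finset α)
    (x : R) :
    ∑ t ∈ s.ssubsets, x ^ #t = (x + 1) ^ #s - x ^ #s := by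
  rw [ssubsets, sum_erase_eq_sub (mem_powerset_self s), ← sum_pow_mul_eq_add_pow]
  simp

section StellarSubdivision

variable {V : Type*} [DecidableEq V] {K : Finset (Finset V)} {e L S : Finset V} {w : V}

@[simp]
theorem mem_link : L ∈ link K e ↔ L ∈ K ∧ Disjoint L e ∧ L ∪ e ∈ K := by
  simp [link]

theorem mem_stellarSub {G : Finset V} :
    G ∈ stellarSub K e w ↔
      (G ∈ K ∧ ¬ e ⊆ G) ∨ ∃ L ∈ link K e, ∃ S ⊂ e, L ∪ S ∪ {w} = G := by
  simp [stellarSub]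

theorem IsComplex.stellarSub (hK : IsComplex K) (e : Finset V) (w : V) :
    IsComplex (stellarSub K e w) := by
  intro F hF G hGF
  rw [mem_stellarSub] at hF ⊢
  rcases hF with ⟨hFK, heF⟩ | ⟨L, hL, S, hSe, rfl⟩
  · exact Or.inl ⟨hK F hFK G hGF, fun heG => heF (heG.trans hGF)⟩
  obtain ⟨hLK, hLe, hLeK⟩ := mem_link.1 hL
  by_cases hwG : w ∈ G
  · refine Or.inr ⟨G ∩ L, ?_, G ∩ S, inter_subset_right.trans_ssubset hSe, ?_⟩
    · exact mem_link.2 ⟨hK L hLK _ inter_subset_right, hLe.mono_left inter_subset_right,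
        hK _ hLeK _ (union_subset_union_left inter_subset_right)⟩
    · ext x
      have := @hGF x
      grind
  · have hG : G ⊆ L ∪ S := fun x hx => by grind
    refine Or.inl ⟨hK _ hLeK G (hG.trans (union_subset_union_right hSe.subset)),
      fun heG => hSe.not_subset fun x hx => ?_⟩
    exact (mem_union.1 (hG (heG hx))).resolve_left (disjoint_right.1 hLe hx)

theorem union_union_singleton_inter (hL : Disjoint L e) (hS : S ⊆ e) (hwe : w ∉ e) :
    (L ∪ S ∪ {w}) ∩ e = S := by
  grind [disjoint_left]

theorem union_union_singleton_sdiff (hL : Disjoint L e) (hS : S ⊆ e) (hwL : w ∉ L) :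
    (L ∪ S ∪ {w}) \ insert w e = L := by
  grind [disjoint_left]

theorem card_union_union_singleton (hL : Disjoint L e) (hS : S ⊆ e) (hwL : w ∉ L) (hwe : w ∉ e) :
    #(L ∪ S ∪ {w}) = #L + #S + 1 := by
  rw [card_union_of_disjoint, card_union_of_disjoint (hL.mono_right hS), card_singleton]
  simp only [disjoint_singleton_right, mem_union, not_or]
  exact ⟨hwL, fun h => hwe (hS h)⟩

theorem sum_filter_superset_pow_card (hK : IsComplex K) (e : Finset V) :
    ∑ F ∈ K with e ⊆ F, (X : ℤ[X]) ^ #F = X ^ #e * fPoly (link K e) := by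
  rw [fPoly, mul_sum]
  refine sum_nbij' (· \ e) (· ∪ e) (fun F hF => ?_) (fun L hL => ?_) (fun F hF => ?_)
    (fun L hL => ?_) (fun F hF => ?_)
  · obtain ⟨hFK, heF⟩ := mem_filter.1 hF
    exact mem_link.2 ⟨hK F hFK _ sdiff_subset, sdiff_disjoint, by rwa [sdiff_union_of_subset heF]⟩
  · exact mem_filter.2 ⟨(mem_link.1 hL).2.2, subset_union_right⟩
  · exact sdiff_union_of_subset (mem_filter.1 hF).2
  · exact union_sdiff_cancel_right (mem_link.1 hL).2.1
  · rw [← pow_add, add_comm, card_sdiff_add_card_eq_card (mem_filter.1 hF).2]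

theorem disjoint_filter_cone (hw : ∀ F ∈ K, w ∉ F) :
    Disjoint (K.filter fun F => ¬ e ⊆ F)
      ((link K e).biUnion fun L => e.ssubsets.image fun S => L ∪ S ∪ {w}) := by
  simp only [disjoint_left, mem_filter, mem_biUnion, mem_image]
  rintro _ ⟨hGK, -⟩ ⟨L, -, S, -, rfl⟩
  exact hw _ hGK (by simp)

theorem fPoly_cone (hw : ∀ F ∈ K, w ∉ F) :
    fPoly ((link K e).biUnion fun L => e.ssubsets.image fun S => L ∪ S ∪ {w}) =
      X * ((X + 1) ^ #e - X ^ #e) * fPoly (link K e) := by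
  have hfresh : ∀ L ∈ link K e, Disjoint L e ∧ w ∉ L ∧ w ∉ e := fun L hL => by
    obtain ⟨hLK, hLe, hLeK⟩ := mem_link.1 hL
    exact ⟨hLe, hw L hLK, fun h => hw _ hLeK (mem_union_right L h)⟩
  rw [fPoly, sum_biUnion, fPoly, mul_sum]
  · refine sum_congr rfl fun L hL => ?_
    obtain ⟨hLe, hwL, hwe⟩ := hfresh L hL
    rw [sum_image fun S hS S' hS' h => by
      rw [← union_union_singleton_inter hLe (mem_ssubsets.1 hS).subset hwe, h,
        union_union_singleton_inter hLe (mem_ssubsets.1 hS').subset hwe]]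
    rw [sum_congr rfl fun S hS => by
      rw [card_union_union_singleton hLe (mem_ssubsets.1 hS).subset hwL hwe]]
    simp only [pow_add, pow_one, ← sum_mul, ← mul_sum, sum_pow_card_ssubsets]
    ring
  · intro L hL L' hL' hne
    simp only [Function.onFun, disjoint_left, mem_image]
    rintro _ ⟨S, hS, rfl⟩ ⟨S', hS', h⟩
    obtain ⟨hLe, hwL, -⟩ := hfresh L hL
    obtain ⟨hL'e, hwL', -⟩ := hfresh L' hL'
    apply hne
    rw [← union_union_singleton_sdiff hLe (mem_ssubsets.1 hS).subset hwL, ← h,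
      union_union_singleton_sdiff hL'e (mem_ssubsets.1 hS').subset hwL']

theorem fPoly_stellarSub_eq (hK : IsComplex K) (hw : ∀ F ∈ K, w ∉ F) :
    fPoly (stellarSub K e w) =
      fPoly K + (X * ((X + 1) ^ #e - X ^ #e) - X ^ #e) * fPoly (link K e) := by
  have hsplit := sum_filter_add_sum_filter_not K (e ⊆ ·) fun F => (X : ℤ[X]) ^ #F
  rw [sum_filter_superset_pow_card hK] at hsplit
  have hcone := fPoly_cone (e := e) hw
  unfold fPoly at hsplit hcone ⊢
  rw [stellarSub, sum_union (disjoint_filter_cone hw), hcone, ← hsplit]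
  ring

end StellarSubdivision

theorem fPoly_stellarSub_general {V : Type*} [DecidableEq V] (K : Finset (Finset V)) (a b w : V)
    (hK : IsComplex K) (hab : a ≠ b)
    (hw : ∀ F ∈ K, w ∉ F) :
    IsComplex (stellarSub K {a, b} w) ∧
    fPoly (stellarSub K {a, b} w) =
      fPoly K + X * (1 + X) * fPoly (link K {a, b}) := by
  refine ⟨hK.stellarSub _ w, ?_⟩
  rw [fPoly_stellarSub_eq hK hw, card_pair hab]
  ring

/-- Change of the f-polynomial under edge stellar subdivision:
`sd_e(K)` is a simplicial complex and
`f(sd_e(K))(t) = f(K)(t) + t(1+t) f(link_K(e))(t)`. -/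
theorem fPoly_stellarSub {V : Type*} [DecidableEq V] (K : Finset (Finset V)) (a b w : V)
    (hK : IsComplex K) (hab : a ≠ b) (he : ({a, b} : Finset V) ∈ K)
    (hw : ∀ F ∈ K, w ∉ F) :
    IsComplex (stellarSub K {a, b} w) ∧
    fPoly (stellarSub K {a, b} w) =
      fPoly K + X * (1 + X) * fPoly (link K {a, b}) :=
  fPoly_stellarSub_general K a b w hK hab hw
end

section
/- Change of the γ-vector under edge stellar subdivision: let K be a simplicial complex, e = {a,b} an edge of K, w a vertex not belonging to K, and n ≥ dim K + 1. Suppose h_n(K)(t) = Σ_{i=0}^{⌊n/2⌋} γ_i·tⁱ·(1+t)^{n-2i} and h_{n-2}(link_K(e))(t) = Σ_{j=0}^{⌊(n-2)/2⌋} γ'_j·tʲ·(1+t)^{n-2-2j} for integers γ_i, γ'_j. Then h_n(sd_e(K))(t) = Σ_{i=0}^{⌊n/2⌋} (γ_i + γ'_{i-1})·tⁱ·(1+t)^{n-2i}, where γ'_{-1} = 0. -/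
open Polynomial
open scoped Classical

/-- The strict subsets of a pair `{a, b}` are `∅`, `{a}`, `{b}`. -/
lemma ssubsets_pair_aux {V : Type*} [DecidableEq V] (a b : V) (hab : a ≠ b) :
    ({a, b} : Finset V).ssubsets = {∅, {a}, {b}} := by
  ext S
  rw [Finset.mem_ssubsets]
  constructor
  · intro h
    have hsub := h.subset
    have hne := h.ne
    simp only [Finset.mem_insert, Finset.mem_singleton]
    by_cases ha : a ∈ S <;> by_cases hb : b ∈ S
    · exact absurd (Finset.Subset.antisymm hsub
        (by intro x hx; simp at hx; rcases hx with rfl|rfl <;> assumption)) hne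
    · right; left
      apply Finset.Subset.antisymm _ (by simpa using ha)
      intro x hx
      rcases Finset.mem_insert.1 (hsub hx) with rfl | h'
      · simp
      · simp only [Finset.mem_singleton] at h' ⊢; subst h'; exact absurd hx hb
    · right; right
      apply Finset.Subset.antisymm _ (by simpa using hb)
      intro x hx
      rcases Finset.mem_insert.1 (hsub hx) with rfl | h'
      · exact absurd hx ha
      · exact h'
    · left
      ext x; simp only [Finset.notMem_empty, iff_false]
      intro hx
      rcases Finset.mem_insert.1 (hsub hx) with rfl | h'
      · exact ha hx
      · simp only [Finset.mem_singleton] at h'; subst h'; exact hb hx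
  · intro h
    simp only [Finset.mem_insert, Finset.mem_singleton] at h
    rcases h with rfl | rfl | rfl
    · exact Finset.empty_ssubset.2 ⟨a, by simp⟩
    · constructor
      · intro x hx; simp at hx; simp [hx]
      · intro hcon; have := hcon (by simp : b ∈ ({a,b}:Finset V)); simp at this
        exact hab this.symm
    · constructor
      · intro x hx; simp at hx; simp [hx]
      · intro hcon; have := hcon (by simp : a ∈ ({a,b}:Finset V)); simp at this
        exact hab this

/-- Change of the h-polynomial under edge stellar subdivision. -/
lemma hPoly_stellarSub_aux {V : Type*} [DecidableEq V] (K : Finset (Finset V)) (a b w : V)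
    (n : ℕ) (hK : IsComplex K) (hab : a ≠ b) (he : ({a, b} : Finset V) ∈ K)
    (hw : ∀ F ∈ K, w ∉ F) (hn : ∀ F ∈ K, F.card ≤ n) :
    hPoly (stellarSub K {a, b} w) n
      = hPoly K n + X * hPoly (link K {a, b}) (n - 2) := by
  set e : Finset V := {a, b} with he_def
  have hwe : w ∉ e := hw _ he
  have hwa : w ≠ a := fun h => hwe (by simp [he_def, h])
  have hwb : w ≠ b := fun h => hwe (by simp [he_def, h])
  have hecard : e.card = 2 := Finset.card_pair hab
  have hlink : ∀ F ∈ link K e, F ∈ K ∧ Disjoint F e ∧ F ∪ e ∈ K := by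
    intro F hF; simpa [link] using (Finset.mem_filter.1 hF).imp id id
  have hlinkcard : ∀ F ∈ link K e, F.card + 2 ≤ n := by
    intro F hF
    obtain ⟨_, hd, hu⟩ := hlink F hF
    have := hn _ hu
    rwa [Finset.card_union_of_disjoint hd, hecard] at this
  -- cardinality of the new faces
  have hcard_new : ∀ F ∈ link K e, ∀ S ∈ e.ssubsets, (F ∪ S ∪ {w}).card = F.card + S.card + 1 := by
    intro F hF S hS
    obtain ⟨hFK, hd, _⟩ := hlink F hF
    have hSe : S ⊆ e := (Finset.mem_ssubsets.1 hS).subset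
    have hdFS : Disjoint F S := hd.mono_right hSe
    have hwFS : w ∉ F ∪ S := by
      simp only [Finset.mem_union]
      rintro (h | h)
      · exact hw _ hFK h
      · exact hwe (hSe h)
    rw [Finset.card_union_of_disjoint (Finset.disjoint_singleton_right.2 hwFS),
      Finset.card_union_of_disjoint hdFS, Finset.card_singleton]
  -- the two parts of stellarSub are disjoint
  have hdisj : Disjoint (K.filter fun F => ¬ e ⊆ F)
      ((link K e).biUnion fun F => e.ssubsets.image fun S => F ∪ S ∪ {w}) := by
    rw [Finset.disjoint_left]
    intro G hG hG'
    obtain ⟨hGK, -⟩ := Finset.mem_filter.1 hG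
    obtain ⟨F, hF, hG'⟩ := Finset.mem_biUnion.1 hG'
    obtain ⟨S, hS, rfl⟩ := Finset.mem_image.1 hG'
    exact hw _ hGK (by simp)
  -- extraction: F is recoverable
  have hext : ∀ F ∈ link K e, ∀ S ∈ e.ssubsets, (F ∪ S ∪ {w}) \ (insert w e) = F := by
    intro F hF S hS
    obtain ⟨hFK, hd, _⟩ := hlink F hF
    have hSe : S ⊆ e := (Finset.mem_ssubsets.1 hS).subset
    ext x
    simp only [Finset.mem_sdiff, Finset.mem_union, Finset.mem_insert, Finset.mem_singleton]
    constructor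
    · rintro ⟨(hx | hx) | rfl, hx'⟩
      · exact hx
      · exact absurd (hSe hx) (fun hh => hx' (Or.inr hh))
      · exact (hx' (Or.inl rfl)).elim
    · intro hx
      refine ⟨Or.inl (Or.inl hx), ?_⟩
      rintro (rfl | hxe)
      · exact hw _ hFK hx
      · exact Finset.disjoint_left.1 hd hx hxe
  -- biUnion is pairwise disjoint
  have hpd : ((link K e) : Set (Finset V)).PairwiseDisjoint
      (fun F => e.ssubsets.image fun S => F ∪ S ∪ {w}) := by
    intro F hF F' hF' hne
    simp only [Function.onFun]
    rw [Finset.disjoint_left]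
    intro G hG hG'
    obtain ⟨S, hS, rfl⟩ := Finset.mem_image.1 hG
    obtain ⟨S', hS', hEq⟩ := Finset.mem_image.1 hG'
    apply hne
    rw [← hext F hF S hS, ← hext F' hF' S' hS', hEq]
  -- injectivity of S ↦ F ∪ S ∪ {w} on ssubsets
  have hinj : ∀ F ∈ link K e, ∀ S ∈ e.ssubsets, ∀ S' ∈ e.ssubsets,
      F ∪ S ∪ {w} = F ∪ S' ∪ {w} → S = S' := by
    intro F hF S hS S' hS' hEq
    obtain ⟨hFK, hd, _⟩ := hlink F hF
    have hSe : S ⊆ e := (Finset.mem_ssubsets.1 hS).subset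
    have hS'e : S' ⊆ e := (Finset.mem_ssubsets.1 hS').subset
    have : (F ∪ S ∪ {w}) ∩ e = (F ∪ S' ∪ {w}) ∩ e := by rw [hEq]
    have key : ∀ T : Finset V, T ⊆ e → (F ∪ T ∪ {w}) ∩ e = T := by
      intro T hT
      ext x
      simp only [Finset.mem_inter, Finset.mem_union, Finset.mem_singleton]
      constructor
      · rintro ⟨(hx | hx) | rfl, hxe⟩
        · exact absurd hxe (Finset.disjoint_left.1 hd hx)
        · exact hx
        · exact absurd hxe hwe
      · intro hx; exact ⟨Or.inl (Or.inr hx), hT hx⟩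
    rw [key S hSe, key S' hS'e] at this
    exact this
  -- now compute
  unfold hPoly stellarSub
  rw [Finset.sum_union hdisj, Finset.sum_biUnion hpd]
  -- rewrite sum over the image
  have himage : ∀ F ∈ link K e,
      (∑ G ∈ e.ssubsets.image (fun S => F ∪ S ∪ {w}), (X:ℤ[X]) ^ G.card * (1 - X) ^ (n - G.card))
        = ∑ S ∈ e.ssubsets, (X:ℤ[X]) ^ (F.card + S.card + 1) * (1 - X) ^ (n - (F.card + S.card + 1)) := by
    intro F hF
    rw [Finset.sum_image (fun S hS S' hS' => hinj F hF S hS S' hS')]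
    exact Finset.sum_congr rfl fun S hS => by rw [hcard_new F hF S hS]
  rw [Finset.sum_congr rfl himage]
  -- enumerate ssubsets
  rw [ssubsets_pair_aux a b hab] at *
  -- split K sum
  have hsplit : (∑ F ∈ K, (X:ℤ[X]) ^ F.card * (1 - X) ^ (n - F.card))
      = (∑ F ∈ K.filter (fun F => ¬ e ⊆ F), (X:ℤ[X]) ^ F.card * (1 - X) ^ (n - F.card))
        + ∑ F ∈ K.filter (fun F => e ⊆ F), (X:ℤ[X]) ^ F.card * (1 - X) ^ (n - F.card) := by
    rw [add_comm, Finset.sum_filter_add_sum_filter_not]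
  rw [hsplit, add_assoc]
  -- the e-containing part equals link sum
  have hbij : (∑ F ∈ K.filter (fun F => e ⊆ F), (X:ℤ[X]) ^ F.card * (1 - X) ^ (n - F.card))
      = ∑ F ∈ link K e, (X:ℤ[X]) ^ (F.card + 2) * (1 - X) ^ (n - (F.card + 2)) := by
    apply Finset.sum_nbij' (i := fun G => G \ e) (j := fun F => F ∪ e)
    · intro G hG
      obtain ⟨hGK, hsub⟩ := Finset.mem_filter.1 hG
      refine Finset.mem_filter.2 ⟨hK _ hGK _ (Finset.sdiff_subset), Finset.sdiff_disjoint, ?_⟩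
      rwa [Finset.sdiff_union_of_subset hsub]
    · intro F hF
      obtain ⟨hFK, hd, hu⟩ := hlink F hF
      exact Finset.mem_filter.2 ⟨hu, Finset.subset_union_right⟩
    · intro G hG
      exact Finset.sdiff_union_of_subset (Finset.mem_filter.1 hG).2
    · intro F hF
      obtain ⟨hFK, hd, hu⟩ := hlink F hF
      exact Finset.union_sdiff_cancel_right hd
    · intro G hG
      obtain ⟨hGK, hsub⟩ := Finset.mem_filter.1 hG
      have : (G \ e).card = G.card - 2 := by rw [Finset.card_sdiff_of_subset hsub, hecard]
      have h2 : 2 ≤ G.card := hecard ▸ Finset.card_le_card hsub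
      rw [this]
      congr 1 <;> congr 1 <;> omega
  rw [hbij, Finset.mul_sum]
  congr 1
  rw [← Finset.sum_add_distrib]
  apply Finset.sum_congr rfl
  intro F hF
  have hc2 : F.card + 2 ≤ n := hlinkcard F hF
  -- sum over {∅, {a}, {b}}
  have hne1 : (∅ : Finset V) ∉ ({({a}:Finset V), {b}} : Finset (Finset V)) := by
    simp only [Finset.mem_insert, Finset.mem_singleton]
    push_neg
    constructor <;> (intro h; exact absurd h.symm (by simp))
  have hne2 : ({a} : Finset V) ∉ ({({b}:Finset V)} : Finset (Finset V)) := by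
    simp only [Finset.mem_singleton]
    intro h
    have : a ∈ ({b} : Finset V) := h ▸ (by simp)
    simp at this; exact hab this
  rw [Finset.sum_insert hne1, Finset.sum_insert hne2, Finset.sum_singleton]
  simp only [Finset.card_empty, Finset.card_singleton]
  set m := n - (F.card + 2) with hm
  have e1 : n - (F.card + 0 + 1) = m + 1 := by omega
  have e2 : n - (F.card + 1 + 1) = m := by omega
  have e3 : n - 2 - F.card = m := by omega
  rw [e1, e3]
  ring

/-- Change of the γ-vector under edge stellar subdivision: if
`h_n(K) = Σ_i γ_i tⁱ(1+t)^{n-2i}` and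
`h_{n-2}(link_K(e)) = Σ_j γ'_j tʲ(1+t)^{n-2-2j}`, then
`h_n(sd_e(K)) = Σ_i (γ_i + γ'_{i-1}) tⁱ(1+t)^{n-2i}` with `γ'_{-1} = 0`. -/
theorem gamma_stellarSub {V : Type*} [DecidableEq V] (K : Finset (Finset V)) (a b w : V)
    (n : ℕ) (hK : IsComplex K) (hab : a ≠ b) (he : ({a, b} : Finset V) ∈ K)
    (hw : ∀ F ∈ K, w ∉ F) (hn : ∀ F ∈ K, F.card ≤ n)
    (γ γ' : ℕ → ℤ)
    (h1 : hPoly K n =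
      ∑ i ∈ Finset.range (n / 2 + 1), C (γ i) * X ^ i * (1 + X) ^ (n - 2 * i))
    (h2 : hPoly (link K {a, b}) (n - 2) =
      ∑ j ∈ Finset.range ((n - 2) / 2 + 1),
        C (γ' j) * X ^ j * (1 + X) ^ (n - 2 - 2 * j)) :
    hPoly (stellarSub K {a, b} w) n =
      ∑ i ∈ Finset.range (n / 2 + 1),
        C (γ i + if i = 0 then 0 else γ' (i - 1)) * X ^ i * (1 + X) ^ (n - 2 * i) := by
  have hn2 : 2 ≤ n := by
    have := hn _ he
    rwa [Finset.card_pair hab] at this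
  rw [hPoly_stellarSub_aux K a b w n hK hab he hw hn, h1, h2]
  have hhalf : (n - 2) / 2 + 1 = n / 2 := by omega
  rw [hhalf]
  have hterm : ∀ i ∈ Finset.range (n / 2 + 1),
      C (γ i + if i = 0 then 0 else γ' (i - 1)) * X ^ i * (1 + X) ^ (n - 2 * i)
      = C (γ i) * X ^ i * (1 + X) ^ (n - 2 * i)
        + (if i = 0 then 0 else C (γ' (i-1)) * X ^ i * (1 + X) ^ (n - 2 * i)) := by
    intro i _
    split_ifs with h
    · simp
    · rw [map_add]; ring
  rw [Finset.sum_congr rfl hterm, Finset.sum_add_distrib]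
  congr 1
  rw [Finset.sum_range_succ']
  simp only [if_pos rfl, add_zero, Nat.add_sub_cancel, if_neg (Nat.succ_ne_zero _),
    Finset.mul_sum, if_true, eq_self_iff_true]
  apply Finset.sum_congr rfl
  intro j _
  have : n - 2 * (j + 1) = n - 2 - 2 * j := by omega
  rw [this, pow_succ]
  ring
end

section
/- Links of old vertices after edge stellar subdivision: let K be a simplicial complex, e = {a,b} an edge of K, and w a vertex not belonging to K. (1) If v is a vertex of K with v ∉ e and e ∪ {v} ∈ K, then link_{sd_e(K)}({v}) = sd_e(link_K({v})), the stellar subdivision of link_K({v}) at e with the same apex w. (2) If v is a vertex of K with v ∉ e and e ∪ {v} ∉ K, then link_{sd_e(K)}({v}) = link_K({v}). (3) For the vertex a ∈ e, link_{sd_e(K)}({a}) = {F ∈ link_K({a}) : b ∉ F} ∪ {(F \ {b}) ∪ {w} : F ∈ link_K({a}), b ∈ F}. (Dual form of the remark that after a 2-truncation each facet either stays unchanged, is perturbed, or itself undergoes a 2-truncation.) -/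
open Polynomial
open scoped Classical

private lemma mem_link' {V : Type*} [DecidableEq V] {K : Finset (Finset V)} {σ F : Finset V} :
    F ∈ link K σ ↔ F ∈ K ∧ Disjoint F σ ∧ F ∪ σ ∈ K := by
  simp [link, and_assoc]

private lemma mem_sd' {V : Type*} [DecidableEq V] {K : Finset (Finset V)}
    {e : Finset V} {w : V} {F : Finset V} :
    F ∈ stellarSub K e w ↔ (F ∈ K ∧ ¬ e ⊆ F) ∨
      ∃ G, G ∈ link K e ∧ ∃ S, S ⊂ e ∧ G ∪ S ∪ {w} = F := by
  simp [stellarSub, Finset.mem_ssubsets, Finset.union_assoc]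

private lemma erase_helper {V : Type*} [DecidableEq V] {s : Finset V} {v : V} (h : v ∉ s) :
    (s ∪ {v}).erase v = s := by
  ext x; simp [Finset.mem_erase]; aesop

/-- Links of old vertices after stellar subdivision at the
edge `e = {a,b}` with fresh apex `w`:
(1) if `v ∉ e` and `e ∪ {v} ∈ K` then `link_{sd_e(K)}({v}) = sd_e(link_K({v}))`;
(2) if `v ∉ e` and `e ∪ {v} ∉ K` then `link_{sd_e(K)}({v}) = link_K({v})`;
(3) `link_{sd_e(K)}({a}) = {F ∈ link_K({a}) : b ∉ F} ∪ {(F \ {b}) ∪ {w} : F ∈ link_K({a}), b ∈ F}`. -/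
theorem link_old_vertices_stellarSub {V : Type*} [DecidableEq V]
    (K : Finset (Finset V)) (a b w : V)
    (hK : IsComplex K) (hab : a ≠ b) (he : ({a, b} : Finset V) ∈ K)
    (hw : ∀ F ∈ K, w ∉ F) :
    (∀ v : V, ({v} : Finset V) ∈ K → v ≠ a → v ≠ b →
      ({a, b} : Finset V) ∪ {v} ∈ K →
      link (stellarSub K {a, b} w) {v} = stellarSub (link K {v}) {a, b} w) ∧
    (∀ v : V, ({v} : Finset V) ∈ K → v ≠ a → v ≠ b →
      ({a, b} : Finset V) ∪ {v} ∉ K →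
      link (stellarSub K {a, b} w) {v} = link K {v}) ∧
    (link (stellarSub K {a, b} w) {a} =
      ((link K {a}).filter fun F => b ∉ F) ∪
        (((link K {a}).filter fun F => b ∈ F).image fun F => F.erase b ∪ {w})) := by
  have hwab : w ∉ ({a, b} : Finset V) := hw _ he
  have hwa : w ≠ a := fun h => hwab (h ▸ Finset.mem_insert_self a {b})
  have hwb : w ≠ b := fun h => hwab (by simp [h])
  refine ⟨?_, ?_, ?_⟩
  -- Part 1
  · intro v hv hva hvb hev
    have hwv : w ≠ v := fun h => hw _ hv (h ▸ Finset.mem_singleton_self v)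
    ext F
    constructor
    · intro h
      obtain ⟨hF, hdis, hFv⟩ := mem_link'.mp h
      have hvF : v ∉ F := Finset.disjoint_singleton_right.mp hdis
      rcases mem_sd'.mp hFv with ⟨hFvK, hFvne⟩ | ⟨G, hG, S, hS, hEq⟩
      · refine mem_sd'.mpr (Or.inl ⟨mem_link'.mpr ⟨hK _ hFvK F Finset.subset_union_left, hdis, hFvK⟩,
          fun hsub => hFvne (hsub.trans Finset.subset_union_left)⟩)
      · obtain ⟨hGK, hGdis, hGeK⟩ := mem_link'.mp hG
        have hvS : v ∉ S := by
          intro hvS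
          have := hS.1 hvS
          simp only [Finset.mem_insert, Finset.mem_singleton] at this
          rcases this with h' | h'
          · exact hva h'
          · exact hvb h'
        have hvG : v ∈ G := by
          have hv' : v ∈ G ∪ S ∪ {w} := by
            rw [hEq]; exact Finset.mem_union_right _ (Finset.mem_singleton_self v)
          simp only [Finset.mem_union, Finset.mem_singleton] at hv'
          rcases hv' with (h' | h') | h'
          · exact h'
          · exact absurd h' hvS
          · exact absurd h'.symm hwv
        have hFeq : G.erase v ∪ S ∪ {w} = F := by
          have h1 : (F ∪ {v}).erase v = F := erase_helper hvF
          rw [← h1, ← hEq, Finset.erase_union_distrib, Finset.erase_union_distrib,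
            Finset.erase_eq_of_notMem hvS,
            Finset.erase_eq_of_notMem (by simp [Ne.symm hwv] : v ∉ ({w} : Finset V))]
        refine mem_sd'.mpr (Or.inr ⟨G.erase v, mem_link'.mpr ⟨?_, ?_, ?_⟩, S, hS, hFeq⟩)
        · exact mem_link'.mpr ⟨hK _ hGK _ (Finset.erase_subset _ _),
            Finset.disjoint_singleton_right.mpr (Finset.notMem_erase _ _), by
              rw [Finset.union_comm, ← Finset.insert_eq, Finset.insert_erase hvG]; exact hGK⟩
        · exact hGdis.mono_left (Finset.erase_subset _ _)
        · refine mem_link'.mpr ⟨hK _ hGeK _ (Finset.union_subset_union_left (Finset.erase_subset _ _)), ?_, ?_⟩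
          · refine Finset.disjoint_singleton_right.mpr ?_
            simp only [Finset.mem_union, Finset.mem_insert, Finset.mem_singleton]
            push_neg
            exact ⟨Finset.notMem_erase _ _, hva, hvb⟩
          · rw [Finset.union_right_comm, Finset.union_comm (G.erase v), ← Finset.insert_eq,
              Finset.insert_erase hvG]
            exact hGeK
    · intro h
      rcases mem_sd'.mp h with ⟨hFL, hne⟩ | ⟨G, hG, S, hS, hEq⟩
      · obtain ⟨hFK, hdis, hFvK⟩ := mem_link'.mp hFL
        refine mem_link'.mpr ⟨mem_sd'.mpr (Or.inl ⟨hFK, hne⟩), hdis, mem_sd'.mpr (Or.inl ⟨hFvK, ?_⟩)⟩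
        intro hsub
        apply hne
        intro x hx
        rcases Finset.mem_union.mp (hsub hx) with h' | h'
        · exact h'
        · exfalso
          rw [Finset.mem_singleton] at h'
          subst h'
          simp only [Finset.mem_insert, Finset.mem_singleton] at hx
          rcases hx with h'' | h''
          · exact hva h''
          · exact hvb h''
      · obtain ⟨hGL, hGdis, hGeL⟩ := mem_link'.mp hG
        obtain ⟨hGK, hGv, hGvK⟩ := mem_link'.mp hGL
        obtain ⟨hGeK, hGev, hGevK⟩ := mem_link'.mp hGeL
        have hvG : v ∉ G := Finset.disjoint_singleton_right.mp hGv
        have hvS : v ∉ S := by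
          intro hvS
          have := hS.1 hvS
          simp only [Finset.mem_insert, Finset.mem_singleton] at this
          rcases this with h' | h'
          · exact hva h'
          · exact hvb h'
        refine mem_link'.mpr ⟨mem_sd'.mpr (Or.inr ⟨G, mem_link'.mpr ⟨hGK, hGdis, hGeK⟩, S, hS, hEq⟩), ?_, ?_⟩
        · refine Finset.disjoint_singleton_right.mpr ?_
          rw [← hEq]
          simp only [Finset.mem_union, Finset.mem_singleton]
          push_neg
          exact ⟨⟨hvG, hvS⟩, Ne.symm hwv⟩
        · refine mem_sd'.mpr (Or.inr ⟨G ∪ {v}, mem_link'.mpr ⟨hGvK, ?_, ?_⟩, S, hS, ?_⟩)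
          · refine Finset.disjoint_union_left.mpr ⟨hGdis, Finset.disjoint_singleton_left.mpr ?_⟩
            simp only [Finset.mem_insert, Finset.mem_singleton]
            push_neg
            exact ⟨hva, hvb⟩
          · rw [Finset.union_right_comm]; exact hGevK
          · rw [← hEq]; ac_rfl
  -- Part 2
  · intro v hv hva hvb hev
    have hwv : w ≠ v := fun h => hw _ hv (h ▸ Finset.mem_singleton_self v)
    ext F
    constructor
    · intro h
      obtain ⟨hF, hdis, hFv⟩ := mem_link'.mp h
      rcases mem_sd'.mp hFv with ⟨hFvK, _⟩ | ⟨G, hG, S, hS, hEq⟩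
      · exact mem_link'.mpr ⟨hK _ hFvK F Finset.subset_union_left, hdis, hFvK⟩
      · exfalso
        obtain ⟨hGK, hGdis, hGeK⟩ := mem_link'.mp hG
        have hvG : v ∈ G := by
          have hv' : v ∈ G ∪ S ∪ {w} := by
            rw [hEq]; exact Finset.mem_union_right _ (Finset.mem_singleton_self v)
          simp only [Finset.mem_union, Finset.mem_singleton] at hv'
          rcases hv' with (h' | h') | h'
          · exact h'
          · have := hS.1 h'
            simp only [Finset.mem_insert, Finset.mem_singleton] at this
            rcases this with h'' | h''
            · exact absurd h'' hva
            · exact absurd h'' hvb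
          · exact absurd h'.symm hwv
        apply hev
        refine hK _ hGeK _ ?_
        intro x hx
        simp only [Finset.mem_union, Finset.mem_insert, Finset.mem_singleton] at hx ⊢
        rcases hx with (h' | h') | h'
        · exact Or.inr (Or.inl h')
        · exact Or.inr (Or.inr h')
        · exact Or.inl (h' ▸ hvG)
    · intro h
      obtain ⟨hFK, hdis, hFvK⟩ := mem_link'.mp h
      have hne2 : ¬ ({a, b} : Finset V) ⊆ F ∪ {v} := fun h' =>
        hev (hK _ hFvK _ (Finset.union_subset h' Finset.subset_union_right))
      have hne1 : ¬ ({a, b} : Finset V) ⊆ F := fun h' =>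
        hne2 (h'.trans Finset.subset_union_left)
      exact mem_link'.mpr ⟨mem_sd'.mpr (Or.inl ⟨hFK, hne1⟩), hdis,
        mem_sd'.mpr (Or.inl ⟨hFvK, hne2⟩)⟩
  -- Part 3
  · ext F
    rw [Finset.mem_union, Finset.mem_filter, Finset.mem_image]
    constructor
    · intro h
      obtain ⟨hF, hdis, hFa⟩ := mem_link'.mp h
      have haF : a ∉ F := Finset.disjoint_singleton_right.mp hdis
      rcases mem_sd'.mp hFa with ⟨hFaK, hne⟩ | ⟨G, hG, S, hS, hEq⟩
      · have hbF : b ∉ F := by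
          intro hb
          apply hne
          intro x hx
          simp only [Finset.mem_insert, Finset.mem_singleton] at hx
          rcases hx with rfl | rfl
          · exact Finset.mem_union_right _ (Finset.mem_singleton_self x)
          · exact Finset.mem_union_left _ hb
        exact Or.inl ⟨mem_link'.mpr ⟨hK _ hFaK F Finset.subset_union_left, hdis, hFaK⟩, hbF⟩
      · obtain ⟨hGK, hGdis, hGeK⟩ := mem_link'.mp hG
        have haG : a ∉ G := fun h' =>
          (Finset.disjoint_left.mp hGdis) h' (Finset.mem_insert_self a {b})
        have hbG : b ∉ G := fun h' =>
          (Finset.disjoint_left.mp hGdis) h' (Finset.mem_insert_of_mem (Finset.mem_singleton_self b))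
        have haS : a ∈ S := by
          have ha' : a ∈ G ∪ S ∪ {w} := by
            rw [hEq]; exact Finset.mem_union_right _ (Finset.mem_singleton_self a)
          simp only [Finset.mem_union, Finset.mem_singleton] at ha'
          rcases ha' with (h' | h') | h'
          · exact absurd h' haG
          · exact h'
          · exact absurd h'.symm hwa
        have hbS : b ∉ S := by
          intro hbS
          exact hS.2 (Finset.insert_subset haS (Finset.singleton_subset_iff.mpr hbS))
        have hSa : S = {a} := by
          apply Finset.Subset.antisymm
          · intro x hx
            have := hS.1 hx
            simp only [Finset.mem_insert, Finset.mem_singleton] at this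
            rcases this with rfl | rfl
            · exact Finset.mem_singleton_self x
            · exact absurd hx hbS
          · exact Finset.singleton_subset_iff.mpr haS
        have hFeq : F = G ∪ {w} := by
          have h1 : (F ∪ {a}).erase a = F := erase_helper haF
          rw [← h1, ← hEq, hSa, Finset.erase_union_distrib, Finset.erase_union_distrib,
            Finset.erase_singleton, Finset.erase_eq_of_notMem haG,
            Finset.erase_eq_of_notMem (by simp [Ne.symm hwa] : a ∉ ({w} : Finset V)),
            Finset.union_empty]
        refine Or.inr ⟨G ∪ {b}, Finset.mem_filter.mpr ⟨mem_link'.mpr ⟨?_, ?_, ?_⟩,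
          Finset.mem_union_right _ (Finset.mem_singleton_self b)⟩, ?_⟩
        · refine hK _ hGeK _ (Finset.union_subset_union_right ?_)
          intro x hx
          rw [Finset.mem_singleton] at hx
          exact Finset.mem_insert_of_mem (Finset.mem_singleton.mpr hx)
        · refine Finset.disjoint_singleton_right.mpr ?_
          simp only [Finset.mem_union, Finset.mem_singleton]
          push_neg
          exact ⟨haG, hab⟩
        · have heq2 : (G ∪ {b}) ∪ {a} = G ∪ {a, b} := by
            ext x
            simp only [Finset.mem_union, Finset.mem_insert, Finset.mem_singleton]
            tauto
          rw [heq2]; exact hGeK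
        · rw [erase_helper hbG]; exact hFeq.symm
    · intro h
      rcases h with ⟨hFL, hbF⟩ | ⟨G, hG, hEq⟩
      · obtain ⟨hFK, hdis, hFaK⟩ := mem_link'.mp hFL
        have haF : a ∉ F := Finset.disjoint_singleton_right.mp hdis
        refine mem_link'.mpr ⟨mem_sd'.mpr (Or.inl ⟨hFK, fun h' =>
          haF (h' (Finset.mem_insert_self a {b}))⟩), hdis,
          mem_sd'.mpr (Or.inl ⟨hFaK, ?_⟩)⟩
        intro h'
        have hb := h' (Finset.mem_insert_of_mem (Finset.mem_singleton_self b))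
        rcases Finset.mem_union.mp hb with h'' | h''
        · exact hbF h''
        · exact hab (Finset.mem_singleton.mp h'').symm
      · obtain ⟨hGL, hbG⟩ := Finset.mem_filter.mp hG
        obtain ⟨hGK, hGdis, hGaK⟩ := mem_link'.mp hGL
        have haG : a ∉ G := Finset.disjoint_singleton_right.mp hGdis
        have haG0 : a ∉ G.erase b := fun h' => haG (Finset.mem_of_mem_erase h')
        have hbG0 : b ∉ G.erase b := Finset.notMem_erase _ _
        have hG0link : G.erase b ∈ link K ({a, b} : Finset V) := by
          refine mem_link'.mpr ⟨hK _ hGK _ (Finset.erase_subset _ _), ?_, ?_⟩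
          · refine Finset.disjoint_right.mpr ?_
            intro x hx
            simp only [Finset.mem_insert, Finset.mem_singleton] at hx
            rcases hx with rfl | rfl
            · exact haG0
            · exact hbG0
          · have heq3 : G.erase b ∪ {a, b} = G ∪ {a} := by
              ext x
              simp only [Finset.mem_union, Finset.mem_insert, Finset.mem_singleton,
                Finset.mem_erase]
              constructor
              · rintro ((⟨-, h'⟩) | h' | rfl)
                · exact Or.inl h'
                · exact Or.inr h'
                · exact Or.inl hbG
              · rintro (h' | rfl)
                · by_cases hxb : x = b
                  · exact Or.inr (Or.inr hxb)
                  · exact Or.inl ⟨hxb, h'⟩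
                · exact Or.inr (Or.inl rfl)
            rw [heq3]; exact hGaK
        have hwG0 : w ∉ G.erase b := fun h' =>
          hw _ hGK (Finset.mem_of_mem_erase h')
        refine mem_link'.mpr ⟨?_, ?_, ?_⟩
        · refine mem_sd'.mpr (Or.inr ⟨G.erase b, hG0link, ∅,
            Finset.empty_ssubset.mpr ⟨a, Finset.mem_insert_self a {b}⟩, ?_⟩)
          rw [Finset.union_empty]; exact hEq
        · refine Finset.disjoint_singleton_right.mpr ?_
          rw [← hEq]
          simp only [Finset.mem_union, Finset.mem_singleton]
          push_neg
          exact ⟨haG0, Ne.symm hwa⟩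
        · refine mem_sd'.mpr (Or.inr ⟨G.erase b, hG0link, {a}, ?_, ?_⟩)
          · have hba : b ∉ ({a} : Finset V) := by
              rw [Finset.mem_singleton]; exact fun h' => hab h'.symm
            have := Finset.ssubset_insert hba
            rwa [← Finset.pair_comm a b] at this
          · rw [← hEq]; ac_rfl
end
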